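/- arXiv:1404.6538 — 12 statements merged into one kernel-verified Lean document; each statement's English description precedes it below -/
import Mathlib

section
/- Let p, q, d be positive integers and let φ_1, …, φ_q : {0,1}^p → {0,1} be Boolean functions satisfying: (i) min over y ∈ {0,1}^p of Σ_{i=1}^q φ_i(y) = 1, and (ii) for every proper subset I ⊊ {1,…,q} there exists y_I ∈ {0,1}^p with Σ_{i∈I} φ_i(y_I) = 0. Let P_1, …, P_q ⊆ {1,…,d} be subsets whose union is {1,…,d}. Then for every x ∈ {0,1}^d, ∏_{j=1}^d x_j = min over y ∈ {0,1}^p of Σ_{i=1}^q φ_i(y) · ∏_{j∈P_i} x_j. -/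
/-!
If every `x j` is `1`, the objective is `∑ i, φ i y`, whose minimum is `1` by (i). Otherwise some
`x j₀` is `0`, which kills every term with `j₀ ∈ P i`; by the covering assumption the remaining
indices form a proper subset, so (ii) gives a `y` annihilating them too, and the objective reaches
its trivial lower bound `0`.
-/

open Finset

section MultipleSplits

variable {ι α κ : Type*} [Fintype ι] (φ : ι → α → ℝ) (P : ι → Finset κ) {x : κ → ℝ}

theorem sum_mul_prod_nonneg (hφ : ∀ i y, 0 ≤ φ i y) (hx : ∀ j, 0 ≤ x j) (y : α) :
    0 ≤ ∑ i, φ i y * ∏ j ∈ P i, x j :=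
  sum_nonneg fun i _ => mul_nonneg (hφ i y) (prod_nonneg fun j _ => hx j)

theorem exists_sum_mul_prod_eq_zero (hφ : ∀ i y, 0 ≤ φ i y)
    (hproper : ∀ I : Finset ι, I ≠ univ → ∃ y, ∑ i ∈ I, φ i y = 0)
    (hcover : ∀ j, ∃ i, j ∈ P i) {j₀ : κ} (hj₀ : x j₀ = 0) :
    ∃ y, ∑ i, φ i y * ∏ j ∈ P i, x j = 0 := by
  classical
  set I := univ.filter fun i => j₀ ∉ P i
  have hI : I ≠ univ := by
    obtain ⟨i₀, hi₀⟩ := hcover j₀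
    have : i₀ ∉ I := by simp [I, hi₀]
    exact fun h => this (h ▸ mem_univ i₀)
  obtain ⟨y, hy⟩ := hproper I hI
  have hφI : ∀ i ∈ I, φ i y = 0 := (sum_eq_zero_iff_of_nonneg fun i _ => hφ i y).mp hy
  refine ⟨y, sum_eq_zero fun i _ => ?_⟩
  by_cases hi : j₀ ∈ P i
  · rw [prod_eq_zero hi hj₀, mul_zero]
  · rw [hφI i (by simp [I, hi]), zero_mul]

end MultipleSplits

theorem quadratization_multiple_splits_general
    (p q d : ℕ)
    (φ : Fin q → (Fin p → Bool) → ℝ)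
    (hφ01 : ∀ i y, φ i y = 0 ∨ φ i y = 1)
    (hmin : IsLeast {s : ℝ | ∃ y : Fin p → Bool, s = ∑ i, φ i y} 1)
    (hproper : ∀ I : Finset (Fin q), I ≠ Finset.univ →
      ∃ y : Fin p → Bool, ∑ i ∈ I, φ i y = 0)
    (P : Fin q → Finset (Fin d)) (hcover : ∀ j : Fin d, ∃ i, j ∈ P i)
    (x : Fin d → ℝ) (hx : ∀ j, x j = 0 ∨ x j = 1) :
    IsLeast {s : ℝ | ∃ y : Fin p → Bool, s = ∑ i, φ i y * ∏ j ∈ P i, x j}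
      (∏ j, x j) := by
  have hφ : ∀ i y, 0 ≤ φ i y := fun i y => by rcases hφ01 i y with h | h <;> simp [h]
  by_cases hall : ∀ j, x j = 1
  · simpa only [hall, prod_const_one, mul_one] using hmin
  · obtain ⟨j₀, hj₀⟩ := not_forall.mp hall
    have hxj₀ : x j₀ = 0 := (hx j₀).resolve_right hj₀
    have hx₀ : ∀ j, 0 ≤ x j := fun j => by rcases hx j with h | h <;> simp [h]
    rw [prod_eq_zero (mem_univ j₀) hxj₀]
    obtain ⟨y, hy⟩ := exists_sum_mul_prod_eq_zero φ P hφ hproper hcover hxj₀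
    exact ⟨⟨y, hy.symm⟩, fun s ⟨y, hs⟩ => hs ▸ sum_mul_prod_nonneg φ P hφ hx₀ y⟩

/-- Theorem 1 (multiple splits of terms). Boolean functions `φ i : {0,1}^p → {0,1}`
are modeled as real-valued functions on `Fin p → Bool` taking only the values 0 and 1.
Condition (i): the minimum over `y` of `∑ i, φ i y` equals 1 (stated via `IsLeast`).
Condition (ii): for every proper subset `I ⊊ [q]` there is `y` with `∑ i ∈ I, φ i y = 0`.
Conclusion: `∏_{j=1}^d x_j` is the minimum over `y ∈ {0,1}^p` of
`∑ i, φ i y * ∏_{j ∈ P i} x_j`. -/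
theorem quadratization_multiple_splits
    (p q d : ℕ) (hp : 0 < p) (hq : 0 < q) (hd : 0 < d)
    (φ : Fin q → (Fin p → Bool) → ℝ)
    (hφ01 : ∀ i y, φ i y = 0 ∨ φ i y = 1)
    (hmin : IsLeast {s : ℝ | ∃ y : Fin p → Bool, s = ∑ i, φ i y} 1)
    (hproper : ∀ I : Finset (Fin q), I ≠ Finset.univ →
      ∃ y : Fin p → Bool, ∑ i ∈ I, φ i y = 0)
    (P : Fin q → Finset (Fin d)) (hcover : ∀ j : Fin d, ∃ i, j ∈ P i)
    (x : Fin d → ℝ) (hx : ∀ j, x j = 0 ∨ x j = 1) :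
    IsLeast {s : ℝ | ∃ y : Fin p → Bool, s = ∑ i, φ i y * ∏ j ∈ P i, x j}
      (∏ j, x j) :=
  quadratization_multiple_splits_general p q d φ hφ01 hmin hproper P hcover x hx
end

section
/- Let n be a positive integer, C ⊆ {1,…,n}, and let 𝓗 be a finite family of subsets of {1,…,n}∖C with nonnegative real coefficients α_H ≥ 0 for H ∈ 𝓗. Then for every x ∈ {0,1}^n, Σ_{H∈𝓗} α_H ∏_{j∈H∪C} x_j = min over w ∈ {0,1} of [ (Σ_{H∈𝓗} α_H)·(1−w)·∏_{j∈C} x_j + Σ_{H∈𝓗} α_H · w · ∏_{j∈H} x_j ]. -/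
open Finset

/-!
Write `p_H = ∏_{j ∈ H} x_j` and `c = ∏_{j ∈ C} x_j`; for binary `x` these are binary, and since
`H ∩ C = ∅` the left-hand side is `∑ α_H p_H c`. The choice `w = 0` gives `(∑ α_H) c` and `w = 1`
gives `∑ α_H p_H`; both dominate `∑ α_H p_H c` because `p_H, c ∈ [0, 1]` and `α_H ≥ 0`, and the
one with `w = 1 - c` equals it.
-/

theorem Finset.prod_eq_zero_or_one {ι M : Type*} [CommMonoidWithZero M] (s : Finset ι) {x : ι → M}
    (hx : ∀ i ∈ s, x i = 0 ∨ x i = 1) : ∏ i ∈ s, x i = 0 ∨ ∏ i ∈ s, x i = 1 := by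
  by_cases hzero : ∃ i ∈ s, x i = 0
  · obtain ⟨i, hi, hxi⟩ := hzero
    exact Or.inl (prod_eq_zero hi hxi)
  · push Not at hzero
    exact Or.inr (prod_eq_one fun i hi => (hx i hi).resolve_left (hzero i hi))

theorem isLeast_split_common_factor {ι : Type*} (s : Finset ι) (α p : ι → ℝ) {c : ℝ}
    (hα : ∀ i ∈ s, 0 ≤ α i) (hp : ∀ i ∈ s, p i ∈ Set.Icc 0 1) (hc : c = 0 ∨ c = 1) :
    IsLeast {t : ℝ | ∃ w : ℝ, (w = 0 ∨ w = 1) ∧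
        t = (∑ i ∈ s, α i) * (1 - w) * c + ∑ i ∈ s, α i * w * p i}
      (∑ i ∈ s, α i * p i * c) := by
  constructor
  · rcases hc with rfl | rfl
    · exact ⟨0, Or.inl rfl, by simp⟩
    · exact ⟨1, Or.inr rfl, by simp⟩
  · have hc₀ : 0 ≤ c := by rcases hc with rfl | rfl <;> norm_num
    have hc₁ : c ≤ 1 := by rcases hc with rfl | rfl <;> norm_num
    rintro t ⟨w, rfl | rfl, rfl⟩
    · simp only [sub_zero, mul_one, mul_zero, zero_mul, sum_const_zero, add_zero, sum_mul]
      refine sum_le_sum fun i hi => ?_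
      exact mul_le_mul_of_nonneg_right (mul_le_of_le_one_right (hα i hi) (hp i hi).2) hc₀
    · simp only [sub_self, mul_zero, zero_mul, mul_one, zero_add]
      refine sum_le_sum fun i hi => ?_
      exact mul_le_of_le_one_right (mul_nonneg (hα i hi) (hp i hi).1) hc₁

theorem quadratization_common_parts_positive_general
    (n : ℕ) (C : Finset (Fin n))
    (𝓗 : Finset (Finset (Fin n))) (h𝓗 : ∀ H ∈ 𝓗, Disjoint H C)
    (α : Finset (Fin n) → ℝ) (hα : ∀ H ∈ 𝓗, 0 ≤ α H)
    (x : Fin n → ℝ) (hx : ∀ j, x j = 0 ∨ x j = 1) :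
    IsLeast
      {s : ℝ | ∃ w : ℝ, (w = 0 ∨ w = 1) ∧
        s = (∑ H ∈ 𝓗, α H) * (1 - w) * ∏ j ∈ C, x j
            + ∑ H ∈ 𝓗, α H * w * ∏ j ∈ H, x j}
      (∑ H ∈ 𝓗, α H * ∏ j ∈ H ∪ C, x j) := by
  have hbinary (S : Finset (Fin n)) : ∏ j ∈ S, x j = 0 ∨ ∏ j ∈ S, x j = 1 :=
    S.prod_eq_zero_or_one fun j _ => hx j
  have hsplit : ∑ H ∈ 𝓗, α H * ∏ j ∈ H ∪ C, x j = ∑ H ∈ 𝓗, α H * (∏ j ∈ H, x j) * ∏ j ∈ C, x j :=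
    sum_congr rfl fun H hH => by rw [prod_union (h𝓗 H hH), mul_assoc]
  rw [hsplit]
  refine isLeast_split_common_factor 𝓗 α (fun H => ∏ j ∈ H, x j) hα (fun H _ => ?_) (hbinary C)
  rcases hbinary H with h | h <;> simp [h]

/-- Theorem 2 (splitting a common part `C` from a collection of positive terms).
The family `𝓗` of subsets of `[n] \ C` is a `Finset` of `Finset`s, each disjoint
from `C`, with nonnegative coefficients `α`. The minimum over the new binary
variable `w ∈ {0,1}` is stated via `IsLeast`. -/
theorem quadratization_common_parts_positive
    (n : ℕ) (hn : 0 < n) (C : Finset (Fin n))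
    (𝓗 : Finset (Finset (Fin n))) (h𝓗 : ∀ H ∈ 𝓗, Disjoint H C)
    (α : Finset (Fin n) → ℝ) (hα : ∀ H ∈ 𝓗, 0 ≤ α H)
    (x : Fin n → ℝ) (hx : ∀ j, x j = 0 ∨ x j = 1) :
    IsLeast
      {s : ℝ | ∃ w : ℝ, (w = 0 ∨ w = 1) ∧
        s = (∑ H ∈ 𝓗, α H) * (1 - w) * ∏ j ∈ C, x j
            + ∑ H ∈ 𝓗, α H * w * ∏ j ∈ H, x j}
      (∑ H ∈ 𝓗, α H * ∏ j ∈ H ∪ C, x j) :=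
  quadratization_common_parts_positive_general n C 𝓗 h𝓗 α hα x hx
end

section
/- In the identity of Theorem 2, the choice w = ∏_{j∈C} x_j attains the minimum: for every x ∈ {0,1}^n, setting w* = ∏_{j∈C} x_j gives (Σ_{H∈𝓗} α_H)·(1−w*)·∏_{j∈C} x_j + Σ_{H∈𝓗} α_H · w* · ∏_{j∈H} x_j = Σ_{H∈𝓗} α_H ∏_{j∈H∪C} x_j, and this value is ≤ the value of the expression at both w = 0 and w = 1. -/
/-! On binary points every product `∏_{j∈S} x_j` is an idempotent in `[0, 1]`. Idempotence of
`p = ∏_{j∈C} x_j` kills the term `(1 - p) p`, and disjointness of `H` and `C` splits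
`∏_{j∈H∪C} x_j = (∏_{j∈H} x_j) p`; the two comparisons then hold termwise, because a factor in
`[0, 1]` can only decrease a nonnegative summand. -/

open Finset

theorem isIdempotentElem_prod {ι M : Type*} [CommMonoid M] {s : Finset ι} {f : ι → M}
    (hf : ∀ i ∈ s, IsIdempotentElem (f i)) : IsIdempotentElem (∏ i ∈ s, f i) := by
  classical
  induction s using Finset.induction_on with
  | empty => simpa using IsIdempotentElem.one
  | insert a s ha ih =>
    rw [prod_insert ha]
    exact (hf a (mem_insert_self a s)).mul (ih fun i hi => hf i (mem_insert_of_mem hi))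

section

variable {ι R : Type*} (s : Finset ι) (α q : ι → R) {p : R}

theorem sum_mul_one_sub_mul_add_sum_mul_eq [CommRing R] (hp : IsIdempotentElem p) :
    (∑ i ∈ s, α i) * (1 - p) * p + ∑ i ∈ s, α i * p * q i = ∑ i ∈ s, α i * (q i * p) := by
  have hp' : (1 - p) * p = 0 := by rw [sub_mul, one_mul, hp.eq, sub_self]
  rw [mul_assoc, hp', mul_zero, zero_add]
  exact sum_congr rfl fun i _ => by ring

variable [CommRing R] [PartialOrder R] [IsOrderedRing R] {s α q}

theorem sum_mul_mul_le_sum_mul_of_le_one_left (hα : ∀ i ∈ s, 0 ≤ α i)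
    (hq : ∀ i ∈ s, q i ≤ 1) (hp : 0 ≤ p) :
    ∑ i ∈ s, α i * (q i * p) ≤ (∑ i ∈ s, α i) * p := by
  rw [sum_mul]
  exact sum_le_sum fun i hi =>
    mul_le_mul_of_nonneg_left (mul_le_of_le_one_left hp (hq i hi)) (hα i hi)

theorem sum_mul_mul_le_sum_mul_of_le_one_right (hα : ∀ i ∈ s, 0 ≤ α i)
    (hq : ∀ i ∈ s, 0 ≤ q i) (hp : p ≤ 1) :
    ∑ i ∈ s, α i * (q i * p) ≤ ∑ i ∈ s, α i * q i :=
  sum_le_sum fun i hi =>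
    mul_le_mul_of_nonneg_left (mul_le_of_le_one_right (hq i hi) hp) (hα i hi)

end

theorem common_parts_positive_minimizer_general
    (n : ℕ) (C : Finset (Fin n))
    (𝓗 : Finset (Finset (Fin n))) (h𝓗 : ∀ H ∈ 𝓗, Disjoint H C)
    (α : Finset (Fin n) → ℝ) (hα : ∀ H ∈ 𝓗, 0 ≤ α H)
    (x : Fin n → ℝ) (hx : ∀ j, x j = 0 ∨ x j = 1) :
    ((∑ H ∈ 𝓗, α H) * (1 - ∏ j ∈ C, x j) * ∏ j ∈ C, x j
        + ∑ H ∈ 𝓗, α H * (∏ j ∈ C, x j) * ∏ j ∈ H, x j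
      = ∑ H ∈ 𝓗, α H * ∏ j ∈ H ∪ C, x j)
    ∧ (∑ H ∈ 𝓗, α H * ∏ j ∈ H ∪ C, x j
        ≤ (∑ H ∈ 𝓗, α H) * (1 - 0) * ∏ j ∈ C, x j
            + ∑ H ∈ 𝓗, α H * 0 * ∏ j ∈ H, x j)
    ∧ (∑ H ∈ 𝓗, α H * ∏ j ∈ H ∪ C, x j
        ≤ (∑ H ∈ 𝓗, α H) * (1 - 1) * ∏ j ∈ C, x j
            + ∑ H ∈ 𝓗, α H * 1 * ∏ j ∈ H, x j) := by
  have hx0 : ∀ j, 0 ≤ x j := fun j => by rcases hx j with h | h <;> simp [h]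
  have hx1 : ∀ j, x j ≤ 1 := fun j => by rcases hx j with h | h <;> simp [h]
  have hprod0 : ∀ S : Finset (Fin n), 0 ≤ ∏ j ∈ S, x j := fun S => prod_nonneg fun j _ => hx0 j
  have hprod1 : ∀ S : Finset (Fin n), ∏ j ∈ S, x j ≤ 1 :=
    fun S => prod_le_one (fun j _ => hx0 j) fun j _ => hx1 j
  have hsplit : ∑ H ∈ 𝓗, α H * ∏ j ∈ H ∪ C, x j
      = ∑ H ∈ 𝓗, α H * ((∏ j ∈ H, x j) * ∏ j ∈ C, x j) :=
    sum_congr rfl fun H hH => by rw [prod_union (h𝓗 H hH)]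
  rw [hsplit]
  refine ⟨sum_mul_one_sub_mul_add_sum_mul_eq _ _ _
      (isIdempotentElem_prod fun j _ => IsIdempotentElem.iff_eq_zero_or_one.mpr (hx j)), ?_, ?_⟩
  · simpa only [sub_zero, mul_one, mul_zero, zero_mul, sum_const_zero, add_zero] using
      sum_mul_mul_le_sum_mul_of_le_one_left hα (fun H _ => hprod1 H) (hprod0 C)
  · simpa only [sub_self, mul_zero, zero_mul, mul_one, zero_add] using
      sum_mul_mul_le_sum_mul_of_le_one_right hα (fun H _ => hprod0 H) (hprod1 C)

/-- Key claim in the proof of Theorem 2: the choice `w* = ∏_{j∈C} x_j` attains the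
minimum. At `w = w*` the expression equals `∑ α_H ∏_{j∈H∪C} x_j`, and this value is
at most the value of the expression at `w = 0` and at `w = 1`. -/
theorem common_parts_positive_minimizer
    (n : ℕ) (hn : 0 < n) (C : Finset (Fin n))
    (𝓗 : Finset (Finset (Fin n))) (h𝓗 : ∀ H ∈ 𝓗, Disjoint H C)
    (α : Finset (Fin n) → ℝ) (hα : ∀ H ∈ 𝓗, 0 ≤ α H)
    (x : Fin n → ℝ) (hx : ∀ j, x j = 0 ∨ x j = 1) :
    ((∑ H ∈ 𝓗, α H) * (1 - ∏ j ∈ C, x j) * ∏ j ∈ C, x j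
        + ∑ H ∈ 𝓗, α H * (∏ j ∈ C, x j) * ∏ j ∈ H, x j
      = ∑ H ∈ 𝓗, α H * ∏ j ∈ H ∪ C, x j)
    ∧ (∑ H ∈ 𝓗, α H * ∏ j ∈ H ∪ C, x j
        ≤ (∑ H ∈ 𝓗, α H) * (1 - 0) * ∏ j ∈ C, x j
            + ∑ H ∈ 𝓗, α H * 0 * ∏ j ∈ H, x j)
    ∧ (∑ H ∈ 𝓗, α H * ∏ j ∈ H ∪ C, x j
        ≤ (∑ H ∈ 𝓗, α H) * (1 - 1) * ∏ j ∈ C, x j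
            + ∑ H ∈ 𝓗, α H * 1 * ∏ j ∈ H, x j) :=
  common_parts_positive_minimizer_general n C 𝓗 h𝓗 α hα x hx
end

section
/- Let n ≥ 2, let i ≠ j be indices in {1,…,n}, and let A, B : {0,1}^n → ℝ where A does not depend on the i-th and j-th coordinates. Suppose f : {0,1}^n → ℝ satisfies f(x) = x_i x_j A(x) + B(x) for all x ∈ {0,1}^n, and let M be a real number with M > max_{x∈{0,1}^n} |A(x)|. Define g : {0,1}^n × {0,1} → ℝ by g(x,w) = w·A(x) + B(x) + M·(x_i x_j − 2 x_i w − 2 x_j w + 3 w). Then min over (x,w) ∈ {0,1}^n × {0,1} of g(x,w) equals min over x ∈ {0,1}^n of f(x), and moreover g(x,w) ≥ f(x) for all x and w, with equality when w = x_i x_j. -/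
/-!
The penalty `p(a,b,w) = ab − 2aw − 2bw + 3w` vanishes on binary points with `w = ab` and is
at least `1` on all other binary points. Since `g(x,w) − f(x) = (w − x_i x_j) A(x) + M p(x_i,x_j,w)`
and `|w − x_i x_j| ≤ 1`, the choice `M > |A|` makes the penalty outweigh any gain from `w ≠ x_i x_j`.
So `g ≥ f` with equality at `w = x_i x_j`, and the two minima over the finite cube agree.
-/

def rosenbergPenalty (a b w : ℝ) : ℝ :=
  a * b - 2 * a * w - 2 * b * w + 3 * w

lemma rosenbergPenalty_mul {a b : ℝ} (ha : a = 0 ∨ a = 1) (hb : b = 0 ∨ b = 1) :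
    rosenbergPenalty a b (a * b) = 0 := by
  rcases ha with rfl | rfl <;> rcases hb with rfl | rfl <;> norm_num [rosenbergPenalty]

lemma one_le_rosenbergPenalty {a b w : ℝ} (ha : a = 0 ∨ a = 1) (hb : b = 0 ∨ b = 1)
    (hw : w = 0 ∨ w = 1) (hne : w ≠ a * b) : 1 ≤ rosenbergPenalty a b w := by
  rcases ha with rfl | rfl <;> rcases hb with rfl | rfl <;> rcases hw with rfl | rfl <;>
    norm_num [rosenbergPenalty] at *

lemma mul_mul_le_add_rosenbergPenalty {a b w c M : ℝ} (ha : a = 0 ∨ a = 1)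
    (hb : b = 0 ∨ b = 1) (hw : w = 0 ∨ w = 1) (hc : |c| < M) :
    a * b * c ≤ w * c + M * rosenbergPenalty a b w := by
  by_cases hne : w = a * b
  · subst hne
    simp [rosenbergPenalty_mul ha hb]
  have hM : 0 ≤ M := (abs_nonneg c).trans hc.le
  have hdiff : |a * b - w| ≤ 1 := by
    rcases ha with rfl | rfl <;> rcases hb with rfl | rfl <;> rcases hw with rfl | rfl <;>
      norm_num
  calc a * b * c = w * c + (a * b - w) * c := by ring
    _ ≤ w * c + |c| := by
        gcongr
        calc (a * b - w) * c ≤ |(a * b - w) * c| := le_abs_self _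
          _ = |a * b - w| * |c| := abs_mul _ _
          _ ≤ |c| := mul_le_of_le_one_left (abs_nonneg c) hdiff
    _ ≤ w * c + M * rosenbergPenalty a b w := by
        gcongr
        calc |c| ≤ M := hc.le
          _ ≤ M * rosenbergPenalty a b w :=
            le_mul_of_one_le_right hM (one_le_rosenbergPenalty ha hb hw hne)

lemma finite_setOf_forall_eq_zero_or_eq_one (ι : Type*) [Finite ι] :
    {x : ι → ℝ | ∀ k, x k = 0 ∨ x k = 1}.Finite := by
  convert Set.Finite.pi (t := fun _ : ι => ({0, 1} : Set ℝ)) fun _ => by simp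
  ext x
  simp [Set.mem_pi]

lemma csInf_eq_csInf_of_subset_of_forall_exists_le {α : Type*} [ConditionallyCompleteLattice α]
    {s t : Set α} (hs : BddBelow s) (hne : s.Nonempty) (hst : s ⊆ t)
    (hts : ∀ b ∈ t, ∃ a ∈ s, a ≤ b) : sInf t = sInf s := by
  obtain ⟨l, hl⟩ := hs
  have ht : BddBelow t := ⟨l, fun b hb => by
    obtain ⟨a, ha, hab⟩ := hts b hb
    exact (hl ha).trans hab⟩
  refine le_antisymm (csInf_le_csInf ht hne hst) (le_csInf (hne.mono hst) fun b hb => ?_)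
  obtain ⟨a, ha, hab⟩ := hts b hb
  exact (csInf_le ⟨l, hl⟩ ha).trans hab

theorem rosenberg_substitution_general
    (n : ℕ) (i j : Fin n)
    (A B f : (Fin n → ℝ) → ℝ)
    (hf : ∀ x, f x = x i * x j * A x + B x)
    (M : ℝ) (hM : ∀ x : Fin n → ℝ, (∀ k, x k = 0 ∨ x k = 1) → |A x| < M)
    (g : (Fin n → ℝ) → ℝ → ℝ)
    (hg : ∀ x w, g x w = w * A x + B x
      + M * (x i * x j - 2 * x i * w - 2 * x j * w + 3 * w)) :
    sInf {s : ℝ | ∃ x : Fin n → ℝ, ∃ w : ℝ, (∀ k, x k = 0 ∨ x k = 1) ∧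
        (w = 0 ∨ w = 1) ∧ s = g x w}
      = sInf {s : ℝ | ∃ x : Fin n → ℝ, (∀ k, x k = 0 ∨ x k = 1) ∧ s = f x}
    ∧ (∀ x : Fin n → ℝ, (∀ k, x k = 0 ∨ x k = 1) → ∀ w : ℝ, (w = 0 ∨ w = 1) →
        f x ≤ g x w)
    ∧ (∀ x : Fin n → ℝ, (∀ k, x k = 0 ∨ x k = 1) → g x (x i * x j) = f x) := by
  have hle : ∀ x : Fin n → ℝ, (∀ k, x k = 0 ∨ x k = 1) → ∀ w : ℝ, (w = 0 ∨ w = 1) →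
      f x ≤ g x w := fun x hx w hw => by
    have key := mul_mul_le_add_rosenbergPenalty (hx i) (hx j) hw (hM x hx)
    rw [rosenbergPenalty] at key
    linarith [hf x, hg x w]
  have heq : ∀ x : Fin n → ℝ, (∀ k, x k = 0 ∨ x k = 1) → g x (x i * x j) = f x :=
    fun x hx => by
      have key := rosenbergPenalty_mul (hx i) (hx j)
      rw [rosenbergPenalty] at key
      linear_combination hg x (x i * x j) - hf x + M * key
  refine ⟨?_, hle, heq⟩
  apply csInf_eq_csInf_of_subset_of_forall_exists_le
  · refine (((finite_setOf_forall_eq_zero_or_eq_one (Fin n)).image f).subset ?_).bddBelow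
    rintro _ ⟨x, hx, rfl⟩
    exact ⟨x, hx, rfl⟩
  · exact ⟨_, 0, fun _ => Or.inl rfl, rfl⟩
  · rintro _ ⟨x, hx, rfl⟩
    have hxij : x i * x j = 0 ∨ x i * x j = 1 := by
      rcases hx i with h | h <;> simp [h, hx j]
    exact ⟨x, x i * x j, hx, hxij, (heq x hx).symm⟩
  · rintro _ ⟨x, w, hx, hw, rfl⟩
    exact ⟨f x, ⟨x, hx, rfl⟩, hle x hx w hw⟩

/-- Correctness of Rosenberg's substitution. `A` does not depend on the `i`-th and
`j`-th coordinates, `f(x) = x_i x_j A(x) + B(x)`, and `M > max |A|` over binary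
points. Then `g(x,w) = w A(x) + B(x) + M (x_i x_j − 2 x_i w − 2 x_j w + 3w)`
has the same minimum over binary `(x,w)` as `f` over binary `x`; moreover
`g(x,w) ≥ f(x)` for all binary `x` and `w ∈ {0,1}`, with equality when `w = x_i x_j`. -/
theorem rosenberg_substitution
    (n : ℕ) (hn : 2 ≤ n) (i j : Fin n) (hij : i ≠ j)
    (A B f : (Fin n → ℝ) → ℝ)
    (hA : ∀ x x' : Fin n → ℝ, (∀ k, k ≠ i → k ≠ j → x k = x' k) → A x = A x')
    (hf : ∀ x, f x = x i * x j * A x + B x)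
    (M : ℝ) (hM : ∀ x : Fin n → ℝ, (∀ k, x k = 0 ∨ x k = 1) → |A x| < M)
    (g : (Fin n → ℝ) → ℝ → ℝ)
    (hg : ∀ x w, g x w = w * A x + B x
      + M * (x i * x j - 2 * x i * w - 2 * x j * w + 3 * w)) :
    sInf {s : ℝ | ∃ x : Fin n → ℝ, ∃ w : ℝ, (∀ k, x k = 0 ∨ x k = 1) ∧
        (w = 0 ∨ w = 1) ∧ s = g x w}
      = sInf {s : ℝ | ∃ x : Fin n → ℝ, (∀ k, x k = 0 ∨ x k = 1) ∧ s = f x}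
    ∧ (∀ x : Fin n → ℝ, (∀ k, x k = 0 ∨ x k = 1) → ∀ w : ℝ, (w = 0 ∨ w = 1) →
        f x ≤ g x w)
    ∧ (∀ x : Fin n → ℝ, (∀ k, x k = 0 ∨ x k = 1) → g x (x i * x j) = f x) :=
  rosenberg_substitution_general n i j A B f hf M hM g hg
end

section
/- For every positive integer d and every x ∈ {0,1}^d, −∏_{j=1}^d x_j = min over w ∈ {0,1} of w·((d−1) − Σ_{j=1}^d x_j). -/
open Finset

variable {ι R : Type*} [Fintype ι] [CommRing R] [LinearOrder R] [IsOrderedRing R]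

theorem sum_le_card_sub_one_of_eq_zero {x : ι → R} (hx : ∀ j, x j ≤ 1) {j₀ : ι} (h₀ : x j₀ = 0) :
    ∑ j, x j ≤ Fintype.card ι - 1 := by
  classical
  have hcard : 1 ≤ Fintype.card ι := Fintype.card_pos_iff.mpr ⟨j₀⟩
  calc ∑ j, x j = ∑ j ∈ univ.erase j₀, x j := by
        rw [← add_sum_erase _ _ (mem_univ j₀), h₀, zero_add]
    _ ≤ #(univ.erase j₀) • (1 : R) := sum_le_card_nsmul _ _ _ fun j _ ↦ hx j
    _ = Fintype.card ι - 1 := by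
        rw [card_erase_of_mem (mem_univ _), card_univ, nsmul_one, Nat.cast_sub hcard, Nat.cast_one]

/-- If some `x j` vanishes both sides are `0`; otherwise both are `-1`. -/
theorem neg_prod_eq_min_zero_card_sub_one_sub_sum {x : ι → R} (hx : ∀ j, x j = 0 ∨ x j = 1) :
    -(∏ j, x j) = min 0 ((Fintype.card ι : R) - 1 - ∑ j, x j) := by
  by_cases hzero : ∃ j, x j = 0
  · obtain ⟨j₀, h₀⟩ := hzero
    have hle : ∑ j, x j ≤ Fintype.card ι - 1 :=
      sum_le_card_sub_one_of_eq_zero (fun j ↦ by rcases hx j with h | h <;> simp [h]) h₀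
    rw [prod_eq_zero (mem_univ j₀) h₀, neg_zero, min_eq_left (sub_nonneg.mpr hle)]
  · have hone : ∀ j, x j = 1 := fun j ↦ (hx j).resolve_left fun h ↦ hzero ⟨j, h⟩
    simp [hone]

theorem freedman_drineas_negative_monomial_general
    (d : ℕ) (x : Fin d → ℝ) (hx : ∀ j, x j = 0 ∨ x j = 1) :
    -(∏ j, x j) =
      min ((0 : ℝ) * (((d : ℝ) - 1) - ∑ j, x j))
          ((1 : ℝ) * (((d : ℝ) - 1) - ∑ j, x j)) := by
  simpa using neg_prod_eq_min_zero_card_sub_one_sub_sum hx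

/-- Freedman–Drineas quadratization of a negative monomial:
`−∏_{j=1}^d x_j = min_{w∈{0,1}} w·((d−1) − ∑_{j=1}^d x_j)`.
The minimum over the single binary variable `w` is written as the real
minimum of the expression at `w = 0` and at `w = 1`. -/
theorem freedman_drineas_negative_monomial
    (d : ℕ) (hd : 0 < d) (x : Fin d → ℝ) (hx : ∀ j, x j = 0 ∨ x j = 1) :
    -(∏ j, x j) =
      min ((0 : ℝ) * (((d : ℝ) - 1) - ∑ j, x j))
          ((1 : ℝ) * (((d : ℝ) - 1) - ∑ j, x j)) :=
  freedman_drineas_negative_monomial_general d x hx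
end

section
/- For every integer d ≥ 3 and every x ∈ {0,1}^d, ∏_{j=1}^d x_j − x_{d−1} x_d = −Σ_{i=1}^{d−2} (1−x_i) ∏_{j=i+1}^d x_j = min over w ∈ {0,1}^{d−2} of Σ_{i=1}^{d−2} w_i·( d − i − (1−x_i) − Σ_{j=i+1}^d x_j ). -/
/-!
Since `x i * ∏_{j>i} x j = ∏_{j≥i} x j`, the summands `(1 - x i) * ∏_{j>i} x j` telescope.
For the minimum, the coefficient of `w i` is `c i = #{j > i | x j = 0} - (1 - x i)`; on binary
inputs `min 0 (c i) = -(1 - x i) * ∏_{j>i} x j`, because a zero among the later variables makes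
`c i ≥ 0` and kills the product. The `w i` are independent, so the minimum of `∑ w i * c i` over
`w ∈ {0,1}` is `∑ min 0 (c i)`.
-/

open Finset

theorem sum_Icc_one_sub_mul_prod_Icc {R : Type*} [CommRing R] (x : ℕ → R) {m N : ℕ}
    (h : m < N) :
    ∑ i ∈ Icc 1 m, (1 - x i) * ∏ j ∈ Icc (i + 1) N, x j
      = ∏ j ∈ Icc (m + 1) N, x j - ∏ j ∈ Icc 1 N, x j := by
  induction m with
  | zero => simp
  | succ m ih =>
    rw [sum_Icc_succ_top (by omega), ih (by omega), ← mul_prod_Ioc_eq_prod_Icc (by omega),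
      ← Icc_add_one_left_eq_Ioc]
    ring

section BinaryMinimization

variable {ι R : Type*} [CommRing R] [LinearOrder R] [IsOrderedRing R]

theorem isLeast_sum_binary_mul (s : Finset ι) (c : ι → R) :
    IsLeast {t : R | ∃ w : ι → R, (∀ i, w i = 0 ∨ w i = 1) ∧ t = ∑ i ∈ s, w i * c i}
      (∑ i ∈ s, min 0 (c i)) := by
  classical
  refine ⟨⟨fun i => if c i < 0 then 1 else 0, fun i => by by_cases hc : c i < 0 <;> simp [hc],
    sum_congr rfl fun i _ => ?_⟩, ?_⟩
  · by_cases hc : c i < 0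
    · simp [hc, hc.le]
    · simp [hc, not_lt.mp hc]
  · rintro t ⟨w, hw, rfl⟩
    refine sum_le_sum fun i _ => ?_
    rcases hw i with h | h <;> simp [h]

theorem min_zero_sum_one_sub_sub_eq_neg_mul_prod {x : ι → R} {a : R} (s : Finset ι)
    (hx : ∀ j ∈ s, x j = 0 ∨ x j = 1) (ha : a = 0 ∨ a = 1) :
    min 0 (∑ j ∈ s, (1 - x j) - (1 - a)) = -((1 - a) * ∏ j ∈ s, x j) := by
  have ha' : 0 ≤ 1 - a ∧ 1 - a ≤ 1 := by rcases ha with rfl | rfl <;> norm_num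
  by_cases hall : ∀ j ∈ s, x j = 1
  · rw [sum_eq_zero fun j hj => by rw [hall j hj, sub_self], prod_eq_one hall, zero_sub,
      mul_one, min_eq_right (neg_nonpos.mpr ha'.1)]
  · push Not at hall
    obtain ⟨j₀, hj₀, hxj₀⟩ := hall
    have hzero : x j₀ = 0 := (hx j₀ hj₀).resolve_right hxj₀
    have hsum : 1 ≤ ∑ j ∈ s, (1 - x j) := by
      calc (1 : R) = 1 - x j₀ := by rw [hzero, sub_zero]
        _ ≤ ∑ j ∈ s, (1 - x j) := single_le_sum (f := fun j => 1 - x j) (fun j hj => by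
            rcases hx j hj with h | h <;> simp [h]) hj₀
    rw [prod_eq_zero hj₀ hzero, mul_zero, neg_zero,
      min_eq_left (sub_nonneg.mpr (ha'.2.trans hsum))]

end BinaryMinimization

theorem sum_Icc_one_sub_eq {R : Type*} [Ring R] (x : ℕ → R) {i d : ℕ} (h : i ≤ d) :
    ∑ j ∈ Icc (i + 1) d, (1 - x j) = (d : R) - i - ∑ j ∈ Icc (i + 1) d, x j := by
  rw [sum_sub_distrib, sum_const, Nat.card_Icc, Nat.add_sub_add_right, nsmul_one, Nat.cast_sub h]

/-- Quadratization of a positive monomial of degree `d ≥ 3` using `d−2` new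
variables. Variables are indexed by `1,…,d` (modeled as `x : ℕ → ℝ` with ranges
`Finset.Icc`). The identity states
`∏_{j=1}^d x_j − x_{d−1} x_d = −∑_{i=1}^{d−2} (1−x_i) ∏_{j=i+1}^d x_j`
and that this quantity is the minimum over `w ∈ {0,1}^{d−2}` of
`∑_{i=1}^{d−2} w_i (d − i − (1−x_i) − ∑_{j=i+1}^d x_j)`. -/
theorem positive_monomial_telescoping_quadratization
    (d : ℕ) (hd : 3 ≤ d) (x : ℕ → ℝ) (hx : ∀ j, x j = 0 ∨ x j = 1) :
    ((∏ j ∈ Finset.Icc 1 d, x j) - x (d - 1) * x d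
      = -∑ i ∈ Finset.Icc 1 (d - 2), (1 - x i) * ∏ j ∈ Finset.Icc (i + 1) d, x j)
    ∧ IsLeast
        {s : ℝ | ∃ w : ℕ → ℝ, (∀ i, w i = 0 ∨ w i = 1) ∧
          s = ∑ i ∈ Finset.Icc 1 (d - 2),
                w i * ((d : ℝ) - (i : ℝ) - (1 - x i) - ∑ j ∈ Finset.Icc (i + 1) d, x j)}
        ((∏ j ∈ Finset.Icc 1 d, x j) - x (d - 1) * x d) := by
  obtain ⟨m, rfl⟩ : ∃ m, d = m + 2 := ⟨d - 2, by omega⟩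
  rw [Nat.add_sub_cancel, show m + 2 - 1 = m + 1 by omega]
  have htop : ∏ j ∈ Icc (m + 1) (m + 2), x j = x (m + 1) * x (m + 2) := by
    rw [← mul_prod_Ioc_eq_prod_Icc (by omega), Nat.Ioc_succ_singleton, prod_singleton]
  have hid : (∏ j ∈ Icc 1 (m + 2), x j) - x (m + 1) * x (m + 2)
      = -∑ i ∈ Icc 1 m, (1 - x i) * ∏ j ∈ Icc (i + 1) (m + 2), x j := by
    rw [sum_Icc_one_sub_mul_prod_Icc x (by omega), htop, neg_sub]
  have hmin : -∑ i ∈ Icc 1 m, (1 - x i) * ∏ j ∈ Icc (i + 1) (m + 2), x j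
      = ∑ i ∈ Icc 1 m,
          min 0 (((m + 2 : ℕ) : ℝ) - i - (1 - x i) - ∑ j ∈ Icc (i + 1) (m + 2), x j) := by
    rw [← sum_neg_distrib]
    refine sum_congr rfl fun i hi => ?_
    rw [sub_right_comm, ← sum_Icc_one_sub_eq x (by have := (mem_Icc.mp hi).2; omega),
      min_zero_sum_one_sub_sub_eq_neg_mul_prod _ (fun j _ => hx j) (hx i)]
  rw [hid, hmin]
  exact ⟨rfl, isLeast_sum_binary_mul _ _⟩
end

section
/- For every positive integer d and every x ∈ {0,1}^d, −∏_{j=1}^d (1−x_j) = min over w ∈ {0,1} of w·((d−1) − Σ_{j=1}^d (1−x_j)) = −1 + Σ_{j=1}^d x_j + min over w' ∈ {0,1} of w'·(1 − Σ_{j=1}^d x_j). -/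
/-!
For binary `x` the product `∏ (1 - x j)` is `1` when all `x j` vanish and `0` otherwise, so
`-∏ (1 - x j) = min 0 (∑ x j - 1)`; the sum `∑ (1 - x j)` is `d - ∑ x j`, which turns this into the
first expression. The second comes from `min 0 a = a + min 0 (-a)`, i.e. from substituting
`w' = 1 - w`.
-/

open Finset

theorem sum_one_sub_eq_card_sub_sum {ι R : Type*} [Fintype ι] [CommRing R] (x : ι → R) :
    ∑ j, (1 - x j) = Fintype.card ι - ∑ j, x j := by
  simp [sum_sub_distrib]

theorem neg_prod_one_sub_eq_min_zero {ι R : Type*} [Fintype ι] [CommRing R] [LinearOrder R]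
    [IsStrictOrderedRing R] {x : ι → R} (hx : ∀ j, x j = 0 ∨ x j = 1) :
    -(∏ j, (1 - x j)) = min 0 (∑ j, x j - 1) := by
  by_cases h : ∃ j, x j = 1
  · obtain ⟨j, hj⟩ := h
    have hprod : ∏ i, (1 - x i) = 0 := prod_eq_zero (mem_univ j) (by rw [hj, sub_self])
    have hsum : 1 ≤ ∑ i, x i :=
      hj ▸ single_le_sum (fun i _ => by rcases hx i with h | h <;> simp [h]) (mem_univ j)
    rw [hprod, min_eq_left (by linarith), neg_zero]
  · have hzero : ∀ j, x j = 0 := fun j => (hx j).resolve_right fun hj => h ⟨j, hj⟩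
    simp [hzero]

theorem min_zero_eq_add_min_zero_neg {α : Type*} [AddCommGroup α] [LinearOrder α]
    [IsOrderedAddMonoid α] (a : α) : min 0 a = a + min 0 (-a) := by
  rw [← min_add_add_left, add_zero, add_neg_cancel, min_comm]

theorem freedman_drineas_negated_monomial_general
    (d : ℕ) (x : Fin d → ℝ) (hx : ∀ j, x j = 0 ∨ x j = 1) :
    (-(∏ j, (1 - x j)) =
      min ((0 : ℝ) * (((d : ℝ) - 1) - ∑ j, (1 - x j)))
          ((1 : ℝ) * (((d : ℝ) - 1) - ∑ j, (1 - x j))))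
    ∧ (-(∏ j, (1 - x j)) =
      -1 + (∑ j, x j) +
        min ((0 : ℝ) * (1 - ∑ j, x j)) ((1 : ℝ) * (1 - ∑ j, x j))) := by
  have hshift : (d : ℝ) - 1 - ∑ j, (1 - x j) = ∑ j, x j - 1 := by
    rw [sum_one_sub_eq_card_sub_sum, Fintype.card_fin]
    ring
  simp only [zero_mul, one_mul, hshift, neg_prod_one_sub_eq_min_zero hx, true_and]
  rw [min_zero_eq_add_min_zero_neg, neg_sub]
  ring

/-- Submodular quadratization of a negative monomial in negated literals:
`−∏_{j=1}^d (1−x_j) = min_{w∈{0,1}} w·((d−1) − ∑_j (1−x_j))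
 = −1 + ∑_j x_j + min_{w'∈{0,1}} w'·(1 − ∑_j x_j)`.
Each minimum over a single binary variable is written as the real minimum of the
expression at `0` and at `1`. -/
theorem freedman_drineas_negated_monomial
    (d : ℕ) (hd : 0 < d) (x : Fin d → ℝ) (hx : ∀ j, x j = 0 ∨ x j = 1) :
    (-(∏ j, (1 - x j)) =
      min ((0 : ℝ) * (((d : ℝ) - 1) - ∑ j, (1 - x j)))
          ((1 : ℝ) * (((d : ℝ) - 1) - ∑ j, (1 - x j))))
    ∧ (-(∏ j, (1 - x j)) =
      -1 + (∑ j, x j) +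
        min ((0 : ℝ) * (1 - ∑ j, x j)) ((1 : ℝ) * (1 - ∑ j, x j))) :=
  freedman_drineas_negated_monomial_general d x hx
end

section
/- Let S_0 and S_1 be disjoint finite subsets of {1,…,n}. Then for every x ∈ {0,1}^n, −∏_{j∈S_0}(1−x_j)·∏_{j∈S_1} x_j = min over (u,v) ∈ {0,1}×{0,1} of [ −u·v + u·Σ_{j∈S_0} x_j + v·Σ_{j∈S_1} (1−x_j) ]. -/
/-!
With `A = ∑_{S₀} x_j` and `B = ∑_{S₁} (1 - x_j)`, the four choices of `(u, v)` give the values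
`0, A, B, A + B - 1`, so the minimum is `min 0 (A + B - 1)` as soon as `A, B ≥ 0`. For binary `x`
each sum is either `0` (and then the matching product is `1`) or at least `1` (and then the
product is `0`), so this minimum is `-1` exactly when both products are `1` and `0` otherwise.
-/

section

variable {R : Type*} [CommRing R] [LinearOrder R] [IsStrictOrderedRing R]

theorem binary_prod_one_sub_cases {ι : Type*} (S : Finset ι) (z : ι → R)
    (hz : ∀ j ∈ S, z j = 0 ∨ z j = 1) :
    ((∏ j ∈ S, (1 - z j)) = 1 ∧ ∑ j ∈ S, z j = 0) ∨
      ((∏ j ∈ S, (1 - z j)) = 0 ∧ 1 ≤ ∑ j ∈ S, z j) := by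
  by_cases hzero : ∀ j ∈ S, z j = 0
  · left
    exact ⟨Finset.prod_eq_one fun j hj => by simp [hzero j hj],
      Finset.sum_eq_zero hzero⟩
  · right
    push Not at hzero
    obtain ⟨j, hjS, hj⟩ := hzero
    have hj₁ : z j = 1 := (hz j hjS).resolve_left hj
    refine ⟨Finset.prod_eq_zero hjS (by simp [hj₁]), ?_⟩
    calc (1 : R) = z j := hj₁.symm
      _ ≤ ∑ i ∈ S, z i :=
        Finset.single_le_sum (fun i hi => by rcases hz i hi with h | h <;> simp [h]) hjS

theorem isLeast_binary_neg_mul_add_mul_add_mul {A B : R} (hA : 0 ≤ A) (hB : 0 ≤ B) :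
    IsLeast {s : R | ∃ u v : R, (u = 0 ∨ u = 1) ∧ (v = 0 ∨ v = 1) ∧
        s = -(u * v) + u * A + v * B}
      (min 0 (A + B - 1)) := by
  constructor
  · rcases le_total 0 (A + B - 1) with h | h
    · exact ⟨0, 0, Or.inl rfl, Or.inl rfl, by simp [min_eq_left h]⟩
    · exact ⟨1, 1, Or.inr rfl, Or.inr rfl, by rw [min_eq_right h]; ring⟩
  · rintro s ⟨u, v, hu | hu, hv | hv, rfl⟩ <;> subst hu hv
    · simp
    · simp [hB]
    · simp [hA]
    · exact min_le_of_right_le (le_of_eq (by ring))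

end

theorem type_one_transformation_general
    (n : ℕ) (S₀ S₁ : Finset (Fin n))
    (x : Fin n → ℝ) (hx : ∀ j, x j = 0 ∨ x j = 1) :
    IsLeast
      {s : ℝ | ∃ u v : ℝ, (u = 0 ∨ u = 1) ∧ (v = 0 ∨ v = 1) ∧
        s = -(u * v) + u * (∑ j ∈ S₀, x j) + v * (∑ j ∈ S₁, (1 - x j))}
      (-((∏ j ∈ S₀, (1 - x j)) * ∏ j ∈ S₁, x j)) := by
  have h₀ := binary_prod_one_sub_cases S₀ x fun j _ => hx j
  have h₁ := binary_prod_one_sub_cases S₁ (fun j => 1 - x j) fun j _ => by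
    rcases hx j with h | h <;> simp [h]
  simp only [sub_sub_cancel] at h₁
  have hA : 0 ≤ ∑ j ∈ S₀, x j := by rcases h₀ with ⟨-, h⟩ | ⟨-, h⟩ <;> linarith
  have hB : 0 ≤ ∑ j ∈ S₁, (1 - x j) := by rcases h₁ with ⟨-, h⟩ | ⟨-, h⟩ <;> linarith
  have hvalue : -((∏ j ∈ S₀, (1 - x j)) * ∏ j ∈ S₁, x j) =
      min 0 ((∑ j ∈ S₀, x j) + (∑ j ∈ S₁, (1 - x j)) - 1) := by
    rcases h₀ with ⟨hP, hA'⟩ | ⟨hP, hA'⟩ <;> rcases h₁ with ⟨hQ, hB'⟩ | ⟨hQ, hB'⟩ <;>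
      rw [hP, hQ] <;> first
        | (rw [hA', hB']; norm_num)
        | (rw [min_eq_left (by linarith)]; ring)
  rw [hvalue]
  exact isLeast_binary_neg_mul_add_mul_add_mul hA hB

/-- Type-I transformation: for disjoint `S₀, S₁ ⊆ [n]` and binary `x`,
`−∏_{j∈S₀}(1−x_j)·∏_{j∈S₁}x_j` is the minimum over binary `(u,v)` of
`−uv + u·∑_{j∈S₀} x_j + v·∑_{j∈S₁}(1−x_j)`. -/
theorem type_one_transformation
    (n : ℕ) (S₀ S₁ : Finset (Fin n)) (hdisj : Disjoint S₀ S₁)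
    (x : Fin n → ℝ) (hx : ∀ j, x j = 0 ∨ x j = 1) :
    IsLeast
      {s : ℝ | ∃ u v : ℝ, (u = 0 ∨ u = 1) ∧ (v = 0 ∨ v = 1) ∧
        s = -(u * v) + u * (∑ j ∈ S₀, x j) + v * (∑ j ∈ S₁, (1 - x j))}
      (-((∏ j ∈ S₀, (1 - x j)) * ∏ j ∈ S₁, x j)) :=
  type_one_transformation_general n S₀ S₁ x hx
end

section
/- Let k ≥ 1 and d = 2k+2. For every x ∈ {0,1}^d, ∏_{j=1}^d x_j = S_2 + min over w ∈ {0,1}^k of [ Σ_{j=1}^k (4j−1)·w_j − 2·(Σ_{j=1}^k w_j)·(Σ_{j=1}^d x_j) ], where S_2 = Σ_{1≤i<j≤d} x_i x_j. -/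
/-!
For binary `x` with `n` ones, `S₂ = n(n-1)/2` and the objective is linear in `w`, with coefficient
`4j - 1 - 2n` on `w_j`, so it is minimised coordinatewise: `w_j = 1` exactly when `2j ≤ n`.
With `t = min(⌊n/2⌋, k)` the minimum is `n(n-1)/2 + 2t² + t - 2tn`, which vanishes for
`n ≤ 2k + 1` (where `t = ⌊n/2⌋`) and equals `1` for `n = 2k + 2` (where `t = k`),
i.e. it is the product of the `x_j`.
-/

open Finset

section Binary

variable {ι : Type*} {x : ι → ℝ}

lemma eq_ite_eq_one_of_binary (hx : ∀ j, x j = 0 ∨ x j = 1) (j : ι) :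
    x j = if x j = 1 then 1 else 0 := by
  rcases hx j with h | h <;> simp [h]

variable [Fintype ι]

lemma two_mul_sum_ite_lt_mul [LinearOrder ι] (x : ι → ℝ) :
    2 * ∑ i, ∑ j, (if i < j then x i * x j else 0) = (∑ i, x i) ^ 2 - ∑ i, x i ^ 2 := by
  have hsplit : ∀ i j, x i * x j = (if i < j then x i * x j else 0)
      + (if j < i then x j * x i else 0) + (if i = j then x i ^ 2 else 0) := by
    intro i j
    rcases lt_trichotomy i j with h | rfl | h
    · simp [h, h.not_gt, h.ne]
    · simp [sq]
    · simp [h, h.not_gt, h.ne', mul_comm]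
  have hswap : ∑ i, ∑ j, (if j < i then x j * x i else 0)
      = ∑ i, ∑ j, (if i < j then x i * x j else 0) := sum_comm
  rw [sq, sum_mul_sum,
    sum_congr rfl fun i _ => sum_congr rfl fun j _ => hsplit i j]
  simp only [sum_add_distrib, hswap, sum_ite_eq, mem_univ, if_true]
  ring

lemma sum_eq_card_of_binary (hx : ∀ j, x j = 0 ∨ x j = 1) :
    ∑ j, x j = #{j | x j = 1} := by
  rw [sum_congr rfl fun j _ => eq_ite_eq_one_of_binary hx j, sum_boole]

lemma prod_eq_ite_of_binary (hx : ∀ j, x j = 0 ∨ x j = 1) :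
    ∏ j, x j = if #{j | x j = 1} = Fintype.card ι then 1 else 0 := by
  rw [prod_congr rfl fun j _ => eq_ite_eq_one_of_binary hx j, Fintype.prod_boole]
  simp [← card_univ, card_filter_eq_iff]

lemma sum_ite_lt_mul_of_binary [LinearOrder ι] (hx : ∀ j, x j = 0 ∨ x j = 1) :
    ∑ i, ∑ j, (if i < j then x i * x j else 0) = ((∑ i, x i) ^ 2 - ∑ i, x i) / 2 := by
  have hsq : ∀ i, x i ^ 2 = x i := fun i => by rcases hx i with h | h <;> simp [h]
  have h := two_mul_sum_ite_lt_mul x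
  simp only [hsq] at h
  linarith

lemma isLeast_add_sum_mul_binary (a : ℝ) (c : ι → ℝ) :
    IsLeast {s | ∃ w : ι → ℝ, (∀ i, w i = 0 ∨ w i = 1) ∧ s = a + ∑ i, c i * w i}
      (a + ∑ i, min (c i) 0) := by
  refine ⟨⟨fun i => if c i ≤ 0 then 1 else 0,
    fun i => by dsimp only; split_ifs <;> simp, ?_⟩, ?_⟩
  · refine congrArg (a + ·) (sum_congr rfl fun i _ => ?_)
    dsimp only
    split_ifs with h
    · simp [h]
    · simp [(not_le.mp h).le]
  · rintro s ⟨w, hw, rfl⟩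
    gcongr with i
    rcases hw i with h | h <;> simp [h]

end Binary

section Minimum

lemma sum_range_min_eq_sum_range (n k : ℕ) :
    ∑ j ∈ range k, min (4 * ((j : ℝ) + 1) - 1 - 2 * n) 0
      = ∑ j ∈ range (min (n / 2) k), (4 * ((j : ℝ) + 1) - 1 - 2 * n) := by
  rw [← sum_range_add_sum_Ico _ (min_le_right (n / 2) k)]
  have hneg : ∀ j ∈ range (min (n / 2) k), min (4 * ((j : ℝ) + 1) - 1 - 2 * n) 0
      = 4 * ((j : ℝ) + 1) - 1 - 2 * n := fun j hj => by
    have : 2 * ((j : ℝ) + 1) ≤ n := by simp only [mem_range] at hj; exact_mod_cast (by omega)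
    exact min_eq_left (by linarith)
  have hpos : ∀ j ∈ Ico (min (n / 2) k) k, min (4 * ((j : ℝ) + 1) - 1 - 2 * n) 0 = 0 :=
      fun j hj => by
    have : (n : ℝ) + 1 ≤ 2 * ((j : ℝ) + 1) := by
      simp only [mem_Ico] at hj; exact_mod_cast (by omega)
    exact min_eq_right (by linarith)
  rw [sum_congr rfl hneg, sum_eq_zero hpos, add_zero]

lemma sum_range_four_mul_sub (t : ℕ) (a : ℝ) :
    ∑ j ∈ range t, (4 * ((j : ℝ) + 1) - 1 - a) = 2 * t ^ 2 + t - t * a := by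
  induction t with
  | zero => simp
  | succ t ih => rw [sum_range_succ, ih]; push_cast; ring

lemma ishikawa_minimum {n k : ℕ} (hn : n ≤ 2 * k + 2) :
    ((n : ℝ) ^ 2 - n) / 2 + ∑ j ∈ range k, min (4 * ((j : ℝ) + 1) - 1 - 2 * n) 0
      = if n = 2 * k + 2 then 1 else 0 := by
  rw [sum_range_min_eq_sum_range, sum_range_four_mul_sub]
  split_ifs with h
  · rw [show min (n / 2) k = k by omega, h]
    push_cast; ring
  · rcases Nat.even_or_odd' n with ⟨m, rfl | rfl⟩
    · rw [show min (2 * m / 2) k = m by omega]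
      push_cast; ring
    · rw [show min ((2 * m + 1) / 2) k = m by omega]
      push_cast; ring

end Minimum

theorem ishikawa_even_general
    (k : ℕ) (d : ℕ) (hd : d = 2 * k + 2)
    (x : Fin d → ℝ) (hx : ∀ j, x j = 0 ∨ x j = 1) :
    IsLeast
      {s : ℝ | ∃ w : Fin k → ℝ, (∀ i, w i = 0 ∨ w i = 1) ∧
        s = (∑ i : Fin d, ∑ j : Fin d, if i < j then x i * x j else 0)
            + ((∑ j : Fin k, (4 * ((j : ℕ) + 1 : ℝ) - 1) * w j)
               - 2 * (∑ j : Fin k, w j) * (∑ j : Fin d, x j))}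
      (∏ j, x j) := by
  subst hd
  set n := #{j | x j = 1}
  have hsum : ∑ j, x j = n := sum_eq_card_of_binary hx
  have hlinear : ∀ w : Fin k → ℝ, (∑ j : Fin k, (4 * ((j : ℕ) + 1 : ℝ) - 1) * w j)
      - 2 * (∑ j : Fin k, w j) * n
        = ∑ j : Fin k, (4 * ((j : ℕ) + 1 : ℝ) - 1 - 2 * n) * w j := by
    intro w
    rw [mul_assoc, sum_mul, mul_sum, ← sum_sub_distrib]
    exact sum_congr rfl fun j _ => by ring
  have hmin := isLeast_add_sum_mul_binary (((n : ℝ) ^ 2 - n) / 2)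
    fun j : Fin k => 4 * ((j : ℕ) + 1 : ℝ) - 1 - 2 * n
  rw [Fin.sum_univ_eq_sum_range (fun j => min (4 * ((j : ℝ) + 1) - 1 - 2 * n) 0),
    ishikawa_minimum (by simpa using card_filter_le univ fun j => x j = 1)] at hmin
  rw [prod_eq_ite_of_binary hx, Fintype.card_fin]
  simpa only [sum_ite_lt_mul_of_binary hx, hsum, hlinear] using hmin

/-- Ishikawa's quadratization of a positive monomial of even degree `d = 2k+2`:
`∏_{j=1}^d x_j = S₂ + min_{w∈{0,1}^k} [∑_{j=1}^k (4j−1) w_j − 2 (∑_j w_j)(∑_j x_j)]`,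
where `S₂ = ∑_{1≤i<j≤d} x_i x_j`. Indices `j = 1,…,k` are modeled by `Fin k`
via `j ↦ j.val + 1`. -/
theorem ishikawa_even
    (k : ℕ) (hk : 1 ≤ k) (d : ℕ) (hd : d = 2 * k + 2)
    (x : Fin d → ℝ) (hx : ∀ j, x j = 0 ∨ x j = 1) :
    IsLeast
      {s : ℝ | ∃ w : Fin k → ℝ, (∀ i, w i = 0 ∨ w i = 1) ∧
        s = (∑ i : Fin d, ∑ j : Fin d, if i < j then x i * x j else 0)
            + ((∑ j : Fin k, (4 * ((j : ℕ) + 1 : ℝ) - 1) * w j)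
               - 2 * (∑ j : Fin k, w j) * (∑ j : Fin d, x j))}
      (∏ j, x j) :=
  ishikawa_even_general k d hd x hx
end

section
/- There is no quadratic penalty function enforcing a triple product: there do not exist real coefficients defining a multilinear polynomial p(x,y,z,w) of degree at most 2 in the four binary variables x, y, z, w such that for all x, y, z, w ∈ {0,1}, p(x,y,z,w) = 0 whenever w = x·y·z and p(x,y,z,w) ≥ 1 whenever w ≠ x·y·z. -/
/-! The third finite difference of a polynomial of degree at most 2 vanishes: for such a
multilinear `q` in three variables, the alternating sum of `q` over the vertices of the unit
cube is zero. Fix `w = 0`. The penalty condition makes `q x y z := p x y z 0` vanish at the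
seven vertices with `xyz = 0`, so the alternating sum forces `q 1 1 1 = 0`; but
`0 ≠ 1 * 1 * 1` requires `q 1 1 1 ≥ 1`. -/

theorem alternating_sum_cube_eq_zero_of_quadratic {R : Type*} [CommRing R]
    {q : R → R → R → R}
    (hq : ∃ a b c d e f g : R, ∀ x y z, q x y z = a + b * x + c * y + d * z + e * x * y
      + f * x * z + g * y * z) :
    q 1 1 1 - q 1 1 0 - q 1 0 1 - q 0 1 1 + q 1 0 0 + q 0 1 0 + q 0 0 1 - q 0 0 0 = 0 := by
  obtain ⟨a, b, c, d, e, f, g, hq⟩ := hq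
  simp only [hq]
  ring

theorem eq_zero_at_one_one_one_of_quadratic {R : Type*} [CommRing R]
    {q : R → R → R → R}
    (hq : ∃ a b c d e f g : R, ∀ x y z, q x y z = a + b * x + c * y + d * z + e * x * y
      + f * x * z + g * y * z)
    (hvanish : ∀ x y z : R, (x = 0 ∨ x = 1) → (y = 0 ∨ y = 1) → (z = 0 ∨ z = 1) →
      x * y * z = 0 → q x y z = 0) :
    q 1 1 1 = 0 := by
  have h := alternating_sum_cube_eq_zero_of_quadratic hq
  simp only [hvanish 1 1 0 (.inr rfl) (.inr rfl) (.inl rfl) (by ring),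
    hvanish 1 0 1 (.inr rfl) (.inl rfl) (.inr rfl) (by ring),
    hvanish 0 1 1 (.inl rfl) (.inr rfl) (.inr rfl) (by ring),
    hvanish 1 0 0 (.inr rfl) (.inl rfl) (.inl rfl) (by ring),
    hvanish 0 1 0 (.inl rfl) (.inr rfl) (.inl rfl) (by ring),
    hvanish 0 0 1 (.inl rfl) (.inl rfl) (.inr rfl) (by ring),
    hvanish 0 0 0 (.inl rfl) (.inl rfl) (.inl rfl) (by ring)] at h
  simpa using h

/-- There is no quadratic penalty function enforcing a triple product: no
multilinear polynomial of degree at most 2 in the binary variables `x, y, z, w`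
(a linear combination of `1, x, y, z, w, xy, xz, xw, yz, yw, zw`) vanishes
whenever `w = xyz` and is at least 1 whenever `w ≠ xyz`. -/
theorem no_quadratic_penalty_for_triple_product :
    ¬ ∃ c₀ c₁ c₂ c₃ c₄ c₅ c₆ c₇ c₈ c₉ c₁₀ : ℝ,
      ∀ x y z w : ℝ, (x = 0 ∨ x = 1) → (y = 0 ∨ y = 1) → (z = 0 ∨ z = 1) →
        (w = 0 ∨ w = 1) →
        (w = x * y * z →
          c₀ + c₁ * x + c₂ * y + c₃ * z + c₄ * w + c₅ * x * y + c₆ * x * z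
            + c₇ * x * w + c₈ * y * z + c₉ * y * w + c₁₀ * z * w = 0) ∧
        (w ≠ x * y * z →
          1 ≤ c₀ + c₁ * x + c₂ * y + c₃ * z + c₄ * w + c₅ * x * y + c₆ * x * z
            + c₇ * x * w + c₈ * y * z + c₉ * y * w + c₁₀ * z * w) := by
  rintro ⟨c₀, c₁, c₂, c₃, c₄, c₅, c₆, c₇, c₈, c₉, c₁₀, h⟩
  let q : ℝ → ℝ → ℝ → ℝ := fun x y z => c₀ + c₁ * x + c₂ * y + c₃ * z + c₄ * 0 + c₅ * x * y
    + c₆ * x * z + c₇ * x * 0 + c₈ * y * z + c₉ * y * 0 + c₁₀ * z * 0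
  have hq_quadratic : ∃ a b c d e f g : ℝ, ∀ x y z, q x y z = a + b * x + c * y + d * z
      + e * x * y + f * x * z + g * y * z :=
    ⟨c₀, c₁, c₂, c₃, c₅, c₆, c₈, fun x y z => by ring⟩
  have hq_vanish : ∀ x y z : ℝ, (x = 0 ∨ x = 1) → (y = 0 ∨ y = 1) → (z = 0 ∨ z = 1) →
      x * y * z = 0 → q x y z = 0 := fun x y z hx hy hz hxyz =>
    (h x y z 0 hx hy hz (.inl rfl)).1 hxyz.symm
  have hq_penalty : 1 ≤ q 1 1 1 :=
    (h 1 1 1 0 (.inr rfl) (.inr rfl) (.inr rfl) (.inl rfl)).2 (by norm_num)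
  rw [eq_zero_at_one_one_one_of_quadratic hq_quadratic hq_vanish] at hq_penalty
  norm_num at hq_penalty
end

section
/- For all x, y, z ∈ {0,1}, x·y·z = min over (u,v) ∈ {0,1}×{0,1} of [ x·u + y·z + (2 − y − u − z)·v ]. -/
/-!
Splitting on one auxiliary bit `u`, the minimum over `u ∈ {0,1}` of `x u + y z (1 − u)` is
`min x (y z) = x y z`. The negative cubic term `−u y z` in `y z (1 − u)` is in turn the minimum
over `v ∈ {0,1}` of `(2 − y − u − z) v` (Freedman–Drineas), and the two minimisations merge into
one over `(u, v)`.
-/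

theorem IsLeast.of_isLeast_inner {α β γ : Type*} [Preorder γ] {P : α → Prop} {Q : β → Prop}
    {F : α → β → γ} {g : α → γ} {m : γ}
    (inner : ∀ u, P u → IsLeast {s | ∃ v, Q v ∧ s = F u v} (g u))
    (outer : IsLeast {s | ∃ u, P u ∧ s = g u} m) :
    IsLeast {s | ∃ u v, P u ∧ Q v ∧ s = F u v} m := by
  obtain ⟨⟨u, hu, rfl⟩, hm⟩ := outer
  obtain ⟨⟨v, hv, hgu⟩, -⟩ := inner u hu
  refine ⟨⟨u, v, hu, hv, hgu⟩, ?_⟩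
  rintro s ⟨u', v', hu', hv', rfl⟩
  exact (hm ⟨u', hu', rfl⟩).trans ((inner u' hu').2 ⟨v', hv', rfl⟩)

theorem isLeast_setOf_eq_or_eq {α β : Type*} [LinearOrder α] (f : β → α) (a b : β) :
    IsLeast {s | ∃ v, (v = a ∨ v = b) ∧ s = f v} (min (f a) (f b)) := by
  refine ⟨?_, ?_⟩
  · rcases min_choice (f a) (f b) with h | h
    · exact ⟨a, Or.inl rfl, h⟩
    · exact ⟨b, Or.inr rfl, h⟩
  · rintro s ⟨v, hv | hv, rfl⟩ <;> subst hv
    exacts [min_le_left _ _, min_le_right _ _]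

theorem min_eq_mul_of_binary {a b : ℝ} (ha : a = 0 ∨ a = 1) (hb : b = 0 ∨ b = 1) :
    min a b = a * b := by
  rcases ha with rfl | rfl <;> rcases hb with rfl | rfl <;> norm_num

theorem min_zero_two_sub_eq_neg_mul {a b c : ℝ} (ha : a = 0 ∨ a = 1) (hb : b = 0 ∨ b = 1)
    (hc : c = 0 ∨ c = 1) : min 0 (2 - a - b - c) = -(a * b * c) := by
  rcases ha with rfl | rfl <;> rcases hb with rfl | rfl <;> rcases hc with rfl | rfl <;> norm_num

/-- Quadratization of a positive cubic term (2-split combined with the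
Freedman–Drineas identity): for binary `x, y, z`,
`xyz = min_{(u,v)∈{0,1}²} [xu + yz + (2 − y − u − z)v]`. -/
theorem cubic_two_split_quadratization
    (x y z : ℝ) (hx : x = 0 ∨ x = 1) (hy : y = 0 ∨ y = 1) (hz : z = 0 ∨ z = 1) :
    IsLeast
      {s : ℝ | ∃ u v : ℝ, (u = 0 ∨ u = 1) ∧ (v = 0 ∨ v = 1) ∧
        s = x * u + y * z + (2 - y - u - z) * v}
      (x * y * z) := by
  have hyz : y * z = 0 ∨ y * z = 1 := by
    rcases hy with rfl | rfl <;> simp [hz]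
  refine IsLeast.of_isLeast_inner (g := fun u => x * u + y * z * (1 - u)) (fun u hu => ?_) ?_
  · convert isLeast_setOf_eq_or_eq (fun v => x * u + y * z + (2 - y - u - z) * v) 0 1
      using 1
    have hfd := min_zero_two_sub_eq_neg_mul hy hu hz
    calc x * u + y * z * (1 - u) = x * u + y * z + min 0 (2 - y - u - z) := by rw [hfd]; ring
      _ = _ := by rw [← min_add_add_left]; ring_nf
  · convert isLeast_setOf_eq_or_eq (fun u => x * u + y * z * (1 - u)) 0 1 using 1
    calc x * y * z = min x (y * z) := by rw [min_eq_mul_of_binary hx hyz, mul_assoc]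
      _ = _ := by rw [min_comm]; ring_nf
end

section
/- For every positive integer p, the family of Boolean functions {φ_z : z ∈ {0,1}^p} on {0,1}^p defined by φ_z(y) = 1 if y = z and φ_z(y) = 0 otherwise, satisfies the splitting condition: min over y ∈ {0,1}^p of Σ_{z∈{0,1}^p} φ_z(y) = 1, and for every proper subset I ⊊ {0,1}^p there exists y_I ∈ {0,1}^p with Σ_{z∈I} φ_z(y_I) = 0. Consequently, by Theorem 1, for any positive integer d and any cover P_z (z ∈ {0,1}^p) of {1,…,d} by sets of size at most ⌈d/2^p⌉, every positive monomial ∏_{j=1}^d x_j equals min over y ∈ {0,1}^p of Σ_{z∈{0,1}^p} φ_z(y) ∏_{j∈P_z} x_j, a sum of 2^p monomial terms each of degree at most p + ⌈d/2^p⌉. -/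
/-!
If some `x j` vanishes, the terms whose product `∏_{j ∈ P i} x j` equals one form a proper
subfamily `I` (because the `P i` cover), and splitting provides a `y` annihilating exactly that
subfamily, so the minimum is `0`; if all `x j` equal one, the minimum is `min_y ∑_i φ i y = 1`.
-/

open Finset

structure IsSplittingFamily {ι α : Type*} [Fintype ι] (φ : ι → α → ℝ) : Prop where
  isLeast_sum : IsLeast {s : ℝ | ∃ y, s = ∑ i, φ i y} 1
  exists_sum_eq_zero : ∀ I : Finset ι, I ≠ univ → ∃ y, ∑ i ∈ I, φ i y = 0

theorem Finset.prod_eq_ite_of_forall_eq_zero_or_one {κ M₀ : Type*} [CommMonoidWithZero M₀]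
    (s : Finset κ) {x : κ → M₀} (hx : ∀ j, x j = 0 ∨ x j = 1) [Decidable (∀ j ∈ s, x j = 1)] :
    ∏ j ∈ s, x j = if ∀ j ∈ s, x j = 1 then 1 else 0 := by
  split_ifs with h
  · exact prod_eq_one h
  · push Not at h
    obtain ⟨j, hj, hj1⟩ := h
    exact prod_eq_zero hj ((hx j).resolve_right hj1)

theorem IsSplittingFamily.isLeast_sum_mul_prod {ι α κ : Type*} [Fintype ι] [Fintype κ]
    {φ : ι → α → ℝ} (hφ : IsSplittingFamily φ) (hφ_nonneg : ∀ i y, 0 ≤ φ i y)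
    {P : ι → Finset κ} (hP : ∀ j, ∃ i, j ∈ P i) {x : κ → ℝ} (hx : ∀ j, x j = 0 ∨ x j = 1) :
    IsLeast {s : ℝ | ∃ y, s = ∑ i, φ i y * ∏ j ∈ P i, x j} (∏ j, x j) := by
  classical
  set I := univ.filter fun i => ∀ j ∈ P i, x j = 1
  have sum_eq : ∀ y, ∑ i, φ i y * ∏ j ∈ P i, x j = ∑ i ∈ I, φ i y := fun y => by
    simp only [prod_eq_ite_of_forall_eq_zero_or_one _ hx, mul_ite, mul_one, mul_zero, I,
      sum_filter]
  have prod_univ : ∏ j, x j = if ∀ j, x j = 1 then 1 else 0 := by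
    simpa using prod_eq_ite_of_forall_eq_zero_or_one univ hx
  simp only [sum_eq, prod_univ]
  split_ifs with hall
  · simpa [I, hall] using hφ.isLeast_sum
  · push Not at hall
    obtain ⟨j₀, hj₀⟩ := hall
    have hI : I ≠ univ := by
      obtain ⟨i₀, hi₀⟩ := hP j₀
      simpa [I, eq_univ_iff_forall] using ⟨i₀, j₀, hi₀, hj₀⟩
    obtain ⟨y, hy⟩ := hφ.exists_sum_eq_zero I hI
    exact ⟨⟨y, hy.symm⟩, by
      rintro s ⟨y', rfl⟩
      exact sum_nonneg fun i _ => hφ_nonneg i y'⟩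

theorem isSplittingFamily_indicator {α : Type*} [Fintype α] [DecidableEq α] [Nonempty α] :
    IsSplittingFamily fun (z y : α) => if y = z then (1 : ℝ) else 0 where
  isLeast_sum := by
    simp only [sum_ite_eq, mem_univ, if_true]
    exact ⟨⟨Classical.arbitrary α, rfl⟩, by rintro s ⟨y, rfl⟩; rfl⟩
  exists_sum_eq_zero I hI := by
    obtain ⟨y, hy⟩ : ∃ y, y ∉ I := by simpa [eq_univ_iff_forall] using hI
    exact ⟨y, by simp [hy]⟩

theorem indicator_family_splitting_general
    (p : ℕ) :
    IsLeast
      {s : ℝ | ∃ y : Fin p → Bool,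
        s = ∑ z : Fin p → Bool, if y = z then (1 : ℝ) else 0} 1
    ∧ (∀ I : Finset (Fin p → Bool), I ≠ Finset.univ →
        ∃ y : Fin p → Bool, ∑ z ∈ I, (if y = z then (1 : ℝ) else 0) = 0)
    ∧ (∀ d : ℕ, 0 < d → ∀ P : (Fin p → Bool) → Finset (Fin d),
        (∀ j : Fin d, ∃ z, j ∈ P z) →
        (∀ z, (P z).card ≤ (d + 2 ^ p - 1) / 2 ^ p) →
        ∀ x : Fin d → ℝ, (∀ j, x j = 0 ∨ x j = 1) →
        IsLeast
          {s : ℝ | ∃ y : Fin p → Bool,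
            s = ∑ z : Fin p → Bool,
                  (if y = z then (1 : ℝ) else 0) * ∏ j ∈ P z, x j}
          (∏ j, x j)) := by
  have hsplit := isSplittingFamily_indicator (α := Fin p → Bool)
  refine ⟨hsplit.isLeast_sum, hsplit.exists_sum_eq_zero, fun d _ P hP _ x hx => ?_⟩
  exact hsplit.isLeast_sum_mul_prod (fun _ _ => by positivity) hP hx

/-- The family of indicator functions `φ_z(y) = [y = z]`, for `z ∈ {0,1}^p`,
satisfies the splitting condition of Theorem 1: the minimum over `y` of
`∑_z φ_z(y)` is 1, and for every proper subset `I ⊊ {0,1}^p` some `y` makes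
`∑_{z∈I} φ_z(y) = 0`. Consequently, for any `d ≥ 1` and any cover
`P_z (z ∈ {0,1}^p)` of `{1,…,d}` by sets of size at most `⌈d/2^p⌉` (natural-number
ceiling division `(d + 2^p − 1)/2^p`), every positive monomial `∏_{j=1}^d x_j`
equals the minimum over `y ∈ {0,1}^p` of `∑_z φ_z(y) ∏_{j∈P_z} x_j`. -/
theorem indicator_family_splitting
    (p : ℕ) (hp : 0 < p) :
    IsLeast
      {s : ℝ | ∃ y : Fin p → Bool,
        s = ∑ z : Fin p → Bool, if y = z then (1 : ℝ) else 0} 1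
    ∧ (∀ I : Finset (Fin p → Bool), I ≠ Finset.univ →
        ∃ y : Fin p → Bool, ∑ z ∈ I, (if y = z then (1 : ℝ) else 0) = 0)
    ∧ (∀ d : ℕ, 0 < d → ∀ P : (Fin p → Bool) → Finset (Fin d),
        (∀ j : Fin d, ∃ z, j ∈ P z) →
        (∀ z, (P z).card ≤ (d + 2 ^ p - 1) / 2 ^ p) →
        ∀ x : Fin d → ℝ, (∀ j, x j = 0 ∨ x j = 1) →
        IsLeast
          {s : ℝ | ∃ y : Fin p → Bool,
            s = ∑ z : Fin p → Bool,
                  (if y = z then (1 : ℝ) else 0) * ∏ j ∈ P z, x j}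
          (∏ j, x j)) :=
  indicator_family_splitting_general p
end
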